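/- arXiv:1707.03588 — 4 statements merged into one kernel-verified Lean document; each statement's English description precedes it below -/
import Mathlib

section
/- Let K ⊆ M and τ ∈ ℝ^M. Then the Pythagorean decomposition γ_M(τ) = γ_K(τ|_K) + v(c_M(τ) − c_K(τ|_K)) holds, and moreover ⟨c_K(τ|_K), c_M(τ) − c_K(τ|_K)⟩_Q = 0. -/
open Matrix

/-- for K ⊆ M one has the Pythagorean decomposition
γ_M(τ) = γ_K(τ|_K) + v(c_M(τ) − c_K(τ|_K)) and ⟨c_K(τ|_K), c_M(τ) − c_K(τ|_K)⟩_Q = 0. -/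
theorem markowitz_pythagoras_feet {n : ℕ} (hn : 0 < n)
    (Q : Matrix (Fin n) (Fin n) ℝ) (hQ : Q.PosDef)
    (M : Finset (Fin n)) (hM : M ≠ Finset.univ)
    (K : Finset (Fin n)) (hKM : K ⊆ M)
    (τ : Fin n → ℝ)
    (cK : Fin n → ℝ)
    (hcK1 : ∀ j ∈ K, cK j = τ j)
    (hcK2 : ∀ i ∉ K, Q.mulVec cK i = 0)
    (cM : Fin n → ℝ)
    (hcM1 : ∀ j ∈ M, cM j = τ j)
    (hcM2 : ∀ i ∉ M, Q.mulVec cM i = 0) :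
    cM ⬝ᵥ Q.mulVec cM
        = cK ⬝ᵥ Q.mulVec cK + (cM - cK) ⬝ᵥ Q.mulVec (cM - cK) ∧
    cK ⬝ᵥ Q.mulVec (cM - cK) = 0 := by
  have hsym : Qᵀ = Q := hQ.isHermitian.eq
  -- the orthogonality
  have horth : cK ⬝ᵥ Q.mulVec (cM - cK) = 0 := by
    have h1 : cK ⬝ᵥ Q.mulVec (cM - cK) = Q.mulVec cK ⬝ᵥ (cM - cK) := by
      rw [dotProduct_mulVec, ← mulVec_transpose, hsym]
    rw [h1]
    apply Finset.sum_eq_zero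
    intro i _
    by_cases hiK : i ∈ K
    · have : cM i - cK i = 0 := by
        rw [hcM1 i (hKM hiK), hcK1 i hiK, sub_self]
      simp [this]
    · simp [hcK2 i hiK]
  have horth' : (cM - cK) ⬝ᵥ Q.mulVec cK = 0 := by
    rw [dotProduct_comm]
    conv_lhs => rw [← hsym, mulVec_transpose, ← dotProduct_mulVec]
    exact horth
  refine ⟨?_, horth⟩
  have hdecomp : cM = cK + (cM - cK) := by ring
  calc cM ⬝ᵥ Q.mulVec cM
      = (cK + (cM - cK)) ⬝ᵥ Q.mulVec (cK + (cM - cK)) := by rw [← hdecomp]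
    _ = cK ⬝ᵥ Q.mulVec cK + cK ⬝ᵥ Q.mulVec (cM - cK)
        + ((cM - cK) ⬝ᵥ Q.mulVec cK + (cM - cK) ⬝ᵥ Q.mulVec (cM - cK)) := by
        rw [mulVec_add, add_dotProduct, dotProduct_add, dotProduct_add]
    _ = cK ⬝ᵥ Q.mulVec cK + (cM - cK) ⬝ᵥ Q.mulVec (cM - cK) := by
        rw [horth, horth']; ring
end

section
/- Let a > 0 and let φ : ℝⁿ → ℝ^M, φ(x) = (x_j)_{j∈M}, be the coordinate projection. Then the image of {x ∈ ℝⁿ : v(x) ≤ a} under φ equals {τ ∈ ℝ^M : γ_M(τ) ≤ a}, and the image of {x ∈ ℝⁿ : v(x) < a} under φ equals {τ ∈ ℝ^M : γ_M(τ) < a}; that is, the shadow of the solid ellipsoid Q_{≤a} under projection parallel to the subspace {x : x_j = 0 for all j ∈ M} is the solid ellipsoid in ℝ^M determined by the positive definite form γ_M. -/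
open Matrix

/-!
The point `c τ` minimises `v` on the fibre `h(τ)`: for `x ∈ h(τ)` the difference `d = x - c τ`
vanishes on `M` while `Q (c τ)` vanishes off `M`, so `d` is `Q`-orthogonal to `c τ` and
`v x = v (c τ) + v d ≥ v (c τ)`. A map with a section through the minimisers of `v` sends every
sublevel set of `v` onto the corresponding sublevel set of `v ∘ c`.
-/

theorem Set.image_preimage_eq_preimage_comp_of_le {α β γ : Type*} [Preorder γ] {f : α → β}
    {q : α → γ} {s : β → α} (hfs : ∀ b, f (s b) = b) (hmin : ∀ x, q (s (f x)) ≤ q x)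
    {S : Set γ} (hS : IsLowerSet S) :
    f '' (q ⁻¹' S) = (q ∘ s) ⁻¹' S := by
  ext b
  constructor
  · rintro ⟨x, hx, rfl⟩
    exact hS (hmin x) hx
  · intro hb
    exact ⟨s b, hb, hfs b⟩

theorem Matrix.PosSemidef.dotProduct_mulVec_le_add {ι : Type*} [Fintype ι]
    {Q : Matrix ι ι ℝ} (hQ : Q.PosSemidef) {y d : ι → ℝ} (hyd : d ⬝ᵥ Q *ᵥ y = 0) :
    y ⬝ᵥ Q *ᵥ y ≤ (y + d) ⬝ᵥ Q *ᵥ (y + d) := by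
  have hsymm : Qᵀ = Q := by
    simpa [conjTranspose_eq_transpose_of_trivial] using hQ.isHermitian.eq
  have hdy : y ⬝ᵥ Q *ᵥ d = 0 := by
    rw [dotProduct_mulVec, ← mulVec_transpose, hsymm, dotProduct_comm, hyd]
  have hdd : 0 ≤ d ⬝ᵥ Q *ᵥ d := by simpa using hQ.dotProduct_mulVec_nonneg d
  calc y ⬝ᵥ Q *ᵥ y ≤ y ⬝ᵥ Q *ᵥ y + y ⬝ᵥ Q *ᵥ d + d ⬝ᵥ Q *ᵥ y + d ⬝ᵥ Q *ᵥ d := by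
        rw [hdy, hyd]; linarith
    _ = (y + d) ⬝ᵥ Q *ᵥ (y + d) := by
        rw [mulVec_add, add_dotProduct, dotProduct_add, dotProduct_add]; ring

theorem Matrix.PosSemidef.dotProduct_mulVec_le_of_eqOn {ι : Type*} [Fintype ι]
    {Q : Matrix ι ι ℝ} (hQ : Q.PosSemidef) {M : Set ι} {c x : ι → ℝ} (hcx : Set.EqOn c x M)
    (hc : ∀ i ∉ M, (Q *ᵥ c) i = 0) :
    c ⬝ᵥ Q *ᵥ c ≤ x ⬝ᵥ Q *ᵥ x := by
  have hortho : (x - c) ⬝ᵥ Q *ᵥ c = 0 := by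
    refine Finset.sum_eq_zero fun i _ => ?_
    by_cases hi : i ∈ M
    · simp [hcx hi]
    · simp [hc i hi]
  simpa using hQ.dotProduct_mulVec_le_add hortho

theorem markowitz_shadow_of_ellipsoid_general {n : ℕ}
    (Q : Matrix (Fin n) (Fin n) ℝ) (hQ : Q.PosDef)
    (M : Finset (Fin n))
    (a : ℝ)
    (c : (↥M → ℝ) → (Fin n → ℝ))
    (hc1 : ∀ τ : ↥M → ℝ, ∀ j : ↥M, c τ j.1 = τ j)
    (hc2 : ∀ τ : ↥M → ℝ, ∀ i ∉ M, Q.mulVec (c τ) i = 0) :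
    (fun x : Fin n → ℝ => fun j : ↥M => x j.1) '' {x | x ⬝ᵥ Q.mulVec x ≤ a}
        = {τ : ↥M → ℝ | (c τ) ⬝ᵥ Q.mulVec (c τ) ≤ a} ∧
    (fun x : Fin n → ℝ => fun j : ↥M => x j.1) '' {x | x ⬝ᵥ Q.mulVec x < a}
        = {τ : ↥M → ℝ | (c τ) ⬝ᵥ Q.mulVec (c τ) < a} := by
  have hsection : ∀ τ, (fun j : ↥M => c τ j.1) = τ := fun τ => funext (hc1 τ)
  have hmin : ∀ x : Fin n → ℝ, c (fun j : ↥M => x j.1) ⬝ᵥ Q *ᵥ c (fun j : ↥M => x j.1)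
      ≤ x ⬝ᵥ Q *ᵥ x := fun x =>
    hQ.posSemidef.dotProduct_mulVec_le_of_eqOn (fun i hi => hc1 _ ⟨i, hi⟩) (hc2 _)
  exact ⟨Set.image_preimage_eq_preimage_comp_of_le hsection hmin (isLowerSet_Iic a),
    Set.image_preimage_eq_preimage_comp_of_le hsection hmin (isLowerSet_Iio a)⟩

/-- the shadow of the solid ellipsoid {v ≤ a} under the coordinate
projection φ : ℝⁿ → ℝ^M is the solid ellipsoid {γ_M ≤ a} in ℝ^M, and likewise for
the open ones.  Here for each τ ∈ ℝ^M, c τ is the unique point of h(τ) with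
(Q·(c τ))_i = 0 for i ∈ M^c, and γ_M(τ) = v(c τ). -/
theorem markowitz_shadow_of_ellipsoid {n : ℕ} (hn : 0 < n)
    (Q : Matrix (Fin n) (Fin n) ℝ) (hQ : Q.PosDef)
    (M : Finset (Fin n)) (hMne : M.Nonempty) (hM : M ≠ Finset.univ)
    (a : ℝ) (ha : 0 < a)
    (c : (↥M → ℝ) → (Fin n → ℝ))
    (hc1 : ∀ τ : ↥M → ℝ, ∀ j : ↥M, c τ j.1 = τ j)
    (hc2 : ∀ τ : ↥M → ℝ, ∀ i ∉ M, Q.mulVec (c τ) i = 0) :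
    (fun x : Fin n → ℝ => fun j : ↥M => x j.1) '' {x | x ⬝ᵥ Q.mulVec x ≤ a}
        = {τ : ↥M → ℝ | (c τ) ⬝ᵥ Q.mulVec (c τ) ≤ a} ∧
    (fun x : Fin n → ℝ => fun j : ↥M => x j.1) '' {x | x ⬝ᵥ Q.mulVec x < a}
        = {τ : ↥M → ℝ | (c τ) ⬝ᵥ Q.mulVec (c τ) < a} :=
  markowitz_shadow_of_ellipsoid_general Q hQ M a c hc1 hc2
end

section
/- Let x0 ∈ ℝⁿ be nonzero and let a > 0, r > 0. The following four statements are equivalent: (i) v(x0) = a, π(x0) = r, and Qx0 = b·p for some b ∈ ℝ; (ii) r·(Qx0) = a·p and a = r²·(pᵀQ⁻¹p)⁻¹; (iii) v(x0) = a, π(x0) = r, and the tangent hyperplane {x : θ_{x0}(x) = a} equals the hyperplane {x : π(x) = r}; (iv) Q_a ∩ h_r = {x0}. -/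
/-!
Everything hinges on one fact: a vector `w` is a multiple of `p` as soon as `w ⬝ᵥ y = 0` for
every `y` with `p ⬝ᵥ y = 0` (the part of `w` orthogonal to `p` is orthogonal to itself).
If both hyperplanes `{θ_{x0} = a}` and `{π = r}` pass through `x0`, they coincide exactly when
`Q x0 ∈ ℝ p`. If `Q_a ∩ h_r = {x0}`, then on each line `x0 + t y` inside `h_r` the form
`v(x0 + t y) = a + 2 t ⟨x0, y⟩_Q + t² v(y)` takes the value `a` only at `t = 0`, which forces
`⟨x0, y⟩_Q = 0`; conversely, if `Q x0 = b p` then `⟨x0, x - x0⟩_Q = 0` on `h_r`, so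
`v(x) = a + v(x - x0)` there. Condition (ii) just solves `Q x0 = b p`, `π(x0) = r` for `x0` and `b`.
-/

open Matrix

section LinearAlgebra

variable {𝕜 ι : Type*} [Field 𝕜] [Fintype ι]

theorem exists_eq_smul_of_forall_dotProduct_eq_zero [LinearOrder 𝕜] [IsStrictOrderedRing 𝕜]
    {p w : ι → 𝕜} (h : ∀ y, p ⬝ᵥ y = 0 → w ⬝ᵥ y = 0) : ∃ b : 𝕜, w = b • p := by
  by_cases hp : p = 0
  · subst hp
    exact ⟨0, by simpa using dotProduct_self_eq_zero.mp (h w (zero_dotProduct w))⟩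
  have hpp : p ⬝ᵥ p ≠ 0 := mt dotProduct_self_eq_zero.mp hp
  set y := w - (p ⬝ᵥ w / p ⬝ᵥ p) • p with hy
  have hpy : p ⬝ᵥ y = 0 := by
    rw [hy, dotProduct_sub, dotProduct_smul, smul_eq_mul, div_mul_cancel₀ _ hpp, sub_self]
  have hyy : y ⬝ᵥ y = 0 := by
    calc y ⬝ᵥ y = w ⬝ᵥ y - (p ⬝ᵥ w / p ⬝ᵥ p) * (p ⬝ᵥ y) := by
          rw [hy, sub_dotProduct, smul_dotProduct, smul_eq_mul]
      _ = 0 := by rw [h y hpy, hpy, mul_zero, sub_zero]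
  exact ⟨_, sub_eq_zero.mp (dotProduct_self_eq_zero.mp hyy)⟩

theorem setOf_dotProduct_eq_eq_setOf_dotProduct_eq_iff [LinearOrder 𝕜] [IsStrictOrderedRing 𝕜]
    {u p x0 : ι → 𝕜} {a r : 𝕜} (ha : a ≠ 0) (hu : u ⬝ᵥ x0 = a) (hp : p ⬝ᵥ x0 = r) :
    {x | u ⬝ᵥ x = a} = {x | p ⬝ᵥ x = r} ↔ ∃ b : 𝕜, u = b • p := by
  constructor
  · intro h
    refine exists_eq_smul_of_forall_dotProduct_eq_zero fun y hy => ?_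
    have hmem : x0 + y ∈ {x | p ⬝ᵥ x = r} := by
      simp only [Set.mem_ofPred_eq, dotProduct_add, hp, hy, add_zero]
    rw [← h, Set.mem_ofPred_eq, dotProduct_add, hu] at hmem
    exact add_eq_left.mp hmem
  · rintro ⟨b, rfl⟩
    rw [smul_dotProduct, hp, smul_eq_mul] at hu
    have hb : b ≠ 0 := left_ne_zero_of_mul (hu ▸ ha)
    ext x
    simp only [Set.mem_ofPred_eq, smul_dotProduct, smul_eq_mul, ← hu, mul_right_inj' hb]

variable {R : Type*} [CommRing R] {Q : Matrix ι ι R}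

theorem Matrix.IsSymm.dotProduct_mulVec (hQ : Q.IsSymm) (x y : ι → R) :
    x ⬝ᵥ Q *ᵥ y = Q *ᵥ x ⬝ᵥ y := by
  rw [Matrix.dotProduct_mulVec, ← vecMul_transpose, hQ.eq]

theorem Matrix.IsSymm.quadForm_add (hQ : Q.IsSymm) (x y : ι → R) :
    (x + y) ⬝ᵥ Q *ᵥ (x + y) = x ⬝ᵥ Q *ᵥ x + 2 * (x ⬝ᵥ Q *ᵥ y) + y ⬝ᵥ Q *ᵥ y := by
  rw [mulVec_add, dotProduct_add, add_dotProduct, add_dotProduct,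
    dotProduct_comm y (Q *ᵥ x), ← hQ.dotProduct_mulVec x y]
  ring

end LinearAlgebra

/-- Condition (i): `x0 ∈ Q_a ∩ h_r` and `Q x0 ∈ ℝ p`. -/
def IsTangencyPoint {ι R : Type*} [Fintype ι] [CommRing R] (Q : Matrix ι ι R) (p : ι → R)
    (a r : R) (x0 : ι → R) : Prop :=
  x0 ⬝ᵥ Q *ᵥ x0 = a ∧ p ⬝ᵥ x0 = r ∧ ∃ b : R, Q *ᵥ x0 = b • p

section Tangency

variable {𝕜 ι : Type*} [Field 𝕜] [Fintype ι] {Q : Matrix ι ι 𝕜} {p x0 : ι → 𝕜} {a r : 𝕜}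

theorem isTangencyPoint_iff_smul_mulVec_eq [DecidableEq ι] [Invertible Q] (ha : a ≠ 0)
    (hr : r ≠ 0) :
    IsTangencyPoint Q p a r x0 ↔
      r • Q *ᵥ x0 = a • p ∧ a = r ^ 2 * (p ⬝ᵥ Q⁻¹ *ᵥ p)⁻¹ := by
  have solve : ∀ b : 𝕜, Q *ᵥ x0 = b • p → x0 = b • Q⁻¹ *ᵥ p := fun b hb => by
    rw [← mulVec_smul, inv_mulVec_eq_vec hb.symm]
  constructor
  · rintro ⟨hv, hπ, b, hb⟩
    have hab : a = b * r := by rw [← hv, hb, dotProduct_smul, dotProduct_comm, hπ, smul_eq_mul]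
    have hrc : r = b * (p ⬝ᵥ Q⁻¹ *ᵥ p) := by rw [← hπ, solve b hb, dotProduct_smul, smul_eq_mul]
    have hc : p ⬝ᵥ Q⁻¹ *ᵥ p ≠ 0 := right_ne_zero_of_mul (hrc ▸ hr)
    refine ⟨by rw [hb, smul_smul, mul_comm, ← hab], ?_⟩
    rw [hab, hrc]
    field_simp
  · rintro ⟨hpar, hac⟩
    have hb : Q *ᵥ x0 = (a / r) • p := by
      rw [div_eq_inv_mul, mul_smul, ← hpar, inv_smul_smul₀ hr]
    have hc : p ⬝ᵥ Q⁻¹ *ᵥ p ≠ 0 := by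
      rintro hc
      rw [hc, _root_.inv_zero, mul_zero] at hac
      exact ha hac
    have hπ : p ⬝ᵥ x0 = r := by
      rw [solve _ hb, dotProduct_smul, smul_eq_mul, hac]
      field_simp
    refine ⟨?_, hπ, _, hb⟩
    rw [hb, dotProduct_smul, dotProduct_comm, hπ, smul_eq_mul]
    field_simp

theorem isTangencyPoint_iff_setOf_eq [LinearOrder 𝕜] [IsStrictOrderedRing 𝕜] (hQ : Q.IsSymm)
    (ha : a ≠ 0) :
    IsTangencyPoint Q p a r x0 ↔
      x0 ⬝ᵥ Q *ᵥ x0 = a ∧ p ⬝ᵥ x0 = r ∧ {x | x0 ⬝ᵥ Q *ᵥ x = a} = {x | p ⬝ᵥ x = r} := by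
  refine and_congr_right fun hv => and_congr_right fun hπ => ?_
  rw [hQ.dotProduct_mulVec] at hv
  simp only [hQ.dotProduct_mulVec x0]
  exact (setOf_dotProduct_eq_eq_setOf_dotProduct_eq_iff ha hv hπ).symm

end Tangency

theorem Matrix.PosDef.isSymm {ι : Type*} {Q : Matrix ι ι ℝ} (hQ : Q.PosDef) : Q.IsSymm :=
  isHermitian_iff_isSymm.mp hQ.isHermitian

section PosDef

variable {ι : Type*} [Fintype ι] {Q : Matrix ι ι ℝ} {p x0 : ι → ℝ} {a r : ℝ}

theorem Matrix.PosDef.eq_zero_of_quadForm_eq_zero (hQ : Q.PosDef) {y : ι → ℝ}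
    (hy : y ⬝ᵥ Q *ᵥ y = 0) : y = 0 := by
  by_contra hy0
  simpa [hy] using hQ.dotProduct_mulVec_pos hy0

theorem setOf_quadForm_eq_and_dotProduct_eq_eq_singleton (hQ : Q.PosDef)
    (h : IsTangencyPoint Q p a r x0) :
    {x | x ⬝ᵥ Q *ᵥ x = a ∧ p ⬝ᵥ x = r} = {x0} := by
  obtain ⟨hv, hπ, b, hb⟩ := h
  refine Set.eq_singleton_iff_unique_mem.mpr ⟨⟨hv, hπ⟩, ?_⟩
  rintro x ⟨hxv, hxπ⟩
  have horth : x0 ⬝ᵥ Q *ᵥ (x - x0) = 0 := by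
    rw [hQ.isSymm.dotProduct_mulVec, hb, smul_dotProduct, dotProduct_sub, hxπ, hπ, sub_self,
      smul_zero]
  have hsplit := hQ.isSymm.quadForm_add x0 (x - x0)
  rw [add_sub_cancel, hxv, hv, horth, mul_zero, add_zero, left_eq_add] at hsplit
  exact sub_eq_zero.mp (hQ.eq_zero_of_quadForm_eq_zero hsplit)

/-- A line `x0 + t y` meets the ellipsoid `Q_a` through `x0` a second time, at
`t = -2 ⟨x0, y⟩_Q / v(y)`, unless it is tangent there. -/
theorem Matrix.PosDef.dotProduct_mulVec_eq_zero_of_setOf_eq_singleton (hQ : Q.PosDef)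
    (h : {x | x ⬝ᵥ Q *ᵥ x = a ∧ p ⬝ᵥ x = r} = {x0}) {y : ι → ℝ} (hy : p ⬝ᵥ y = 0) :
    x0 ⬝ᵥ Q *ᵥ y = 0 := by
  have hx0 : x0 ∈ {x | x ⬝ᵥ Q *ᵥ x = a ∧ p ⬝ᵥ x = r} := h ▸ Set.mem_singleton x0
  obtain ⟨hv, hπ⟩ := hx0
  by_contra hs
  have hy0 : y ≠ 0 := by
    rintro rfl
    exact hs (by rw [mulVec_zero, dotProduct_zero])
  have hvy : y ⬝ᵥ Q *ᵥ y ≠ 0 := (hQ.dotProduct_mulVec_pos hy0).ne'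
  set t := -2 * (x0 ⬝ᵥ Q *ᵥ y) / (y ⬝ᵥ Q *ᵥ y)
  have ht : t ≠ 0 := div_ne_zero (mul_ne_zero (by norm_num) hs) hvy
  have hmem : x0 + t • y ∈ {x | x ⬝ᵥ Q *ᵥ x = a ∧ p ⬝ᵥ x = r} := by
    refine ⟨?_, by rw [dotProduct_add, dotProduct_smul, hy, smul_zero, add_zero, hπ]⟩
    rw [hQ.isSymm.quadForm_add, hv]
    simp only [mulVec_smul, dotProduct_smul, smul_dotProduct, smul_eq_mul, t]
    field_simp
    ring
  rw [h, Set.mem_singleton_iff, add_eq_left, smul_eq_zero] at hmem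
  exact hmem.elim ht hy0

theorem isTangencyPoint_iff_setOf_eq_singleton (hQ : Q.PosDef) :
    IsTangencyPoint Q p a r x0 ↔ {x | x ⬝ᵥ Q *ᵥ x = a ∧ p ⬝ᵥ x = r} = {x0} := by
  refine ⟨setOf_quadForm_eq_and_dotProduct_eq_eq_singleton hQ, fun h => ?_⟩
  have hx0 : x0 ∈ {x | x ⬝ᵥ Q *ᵥ x = a ∧ p ⬝ᵥ x = r} := h ▸ Set.mem_singleton x0
  obtain ⟨hv, hπ⟩ := hx0
  refine ⟨hv, hπ, exists_eq_smul_of_forall_dotProduct_eq_zero fun y hy => ?_⟩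
  rw [← hQ.isSymm.dotProduct_mulVec]
  exact hQ.dotProduct_mulVec_eq_zero_of_setOf_eq_singleton h hy

end PosDef

theorem markowitz_tangency_equivalences_general {n : ℕ}
    (Q : Matrix (Fin n) (Fin n) ℝ) (hQ : Q.PosDef)
    (p : Fin n → ℝ)
    (a r : ℝ) (ha : 0 < a) (hr : 0 < r)
    (x0 : Fin n → ℝ) :
    ((x0 ⬝ᵥ Q.mulVec x0 = a ∧ p ⬝ᵥ x0 = r ∧ ∃ b : ℝ, Q.mulVec x0 = b • p) ↔
      (r • Q.mulVec x0 = a • p ∧ a = r ^ 2 * (p ⬝ᵥ Q⁻¹.mulVec p)⁻¹)) ∧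
    ((x0 ⬝ᵥ Q.mulVec x0 = a ∧ p ⬝ᵥ x0 = r ∧ ∃ b : ℝ, Q.mulVec x0 = b • p) ↔
      (x0 ⬝ᵥ Q.mulVec x0 = a ∧ p ⬝ᵥ x0 = r ∧
        {x : Fin n → ℝ | x0 ⬝ᵥ Q.mulVec x = a} = {x : Fin n → ℝ | p ⬝ᵥ x = r})) ∧
    ((x0 ⬝ᵥ Q.mulVec x0 = a ∧ p ⬝ᵥ x0 = r ∧ ∃ b : ℝ, Q.mulVec x0 = b • p) ↔
      {x : Fin n → ℝ | x ⬝ᵥ Q.mulVec x = a ∧ p ⬝ᵥ x = r} = {x0}) := by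
  let := hQ.isUnit.invertible
  exact ⟨isTangencyPoint_iff_smul_mulVec_eq ha.ne' hr.ne',
    isTangencyPoint_iff_setOf_eq hQ.isSymm ha.ne', isTangencyPoint_iff_setOf_eq_singleton hQ⟩

/-- for x0 ≠ 0, a > 0, r > 0 the following are equivalent:
(i) x0 ∈ Q_a ∩ h_r and Qx0 ∈ ℝp; (ii) r·Qx0 = a·p and a = r²(pᵀQ⁻¹p)⁻¹;
(iii) x0 ∈ Q_a ∩ h_r and θ_{x0} = h_r as hyperplanes; (iv) Q_a ∩ h_r = {x0}. -/
theorem markowitz_tangency_equivalences {n : ℕ} (hn : 0 < n)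
    (Q : Matrix (Fin n) (Fin n) ℝ) (hQ : Q.PosDef)
    (p : Fin n → ℝ) (hp : p ≠ 0)
    (a r : ℝ) (ha : 0 < a) (hr : 0 < r)
    (x0 : Fin n → ℝ) (hx0 : x0 ≠ 0) :
    ((x0 ⬝ᵥ Q.mulVec x0 = a ∧ p ⬝ᵥ x0 = r ∧ ∃ b : ℝ, Q.mulVec x0 = b • p) ↔
      (r • Q.mulVec x0 = a • p ∧ a = r ^ 2 * (p ⬝ᵥ Q⁻¹.mulVec p)⁻¹)) ∧
    ((x0 ⬝ᵥ Q.mulVec x0 = a ∧ p ⬝ᵥ x0 = r ∧ ∃ b : ℝ, Q.mulVec x0 = b • p) ↔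
      (x0 ⬝ᵥ Q.mulVec x0 = a ∧ p ⬝ᵥ x0 = r ∧
        {x : Fin n → ℝ | x0 ⬝ᵥ Q.mulVec x = a} = {x : Fin n → ℝ | p ⬝ᵥ x = r})) ∧
    ((x0 ⬝ᵥ Q.mulVec x0 = a ∧ p ⬝ᵥ x0 = r ∧ ∃ b : ℝ, Q.mulVec x0 = b • p) ↔
      {x : Fin n → ℝ | x ⬝ᵥ Q.mulVec x = a ∧ p ⬝ᵥ x = r} = {x0}) :=
  markowitz_tangency_equivalences_general Q hQ p a r ha hr x0
end

section
/- Let ℓ ∈ M, K = M ∖ {ℓ}, and fix μ ∈ ℝ^K; let ϱ = (c_K(μ))_ℓ be the ℓ-th coordinate of the foot of the Q-perpendicular from the origin to h(μ), and for r ∈ ℝ let τ(r) ∈ ℝ^M be the vector agreeing with μ on K and with τ(r)_ℓ = r. Then for every r ∈ ℝ one has the quadratic relation γ_M(τ(r)) = γ_K(μ) + (r − ϱ)² / ((Q^{(K^c)})⁻¹)_{ℓℓ}, where ((Q^{(K^c)})⁻¹)_{ℓℓ} denotes the (ℓ,ℓ) entry of the inverse of the principal submatrix Q^{(K^c)}; moreover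 c_M(τ(ϱ)) = c_K(μ). -/
/-!
Put `S = Kᶜ`, `x = c_K(μ)`, `y = c_M(τ(r))` and `d = y - x`, so `d` vanishes off `S`, `Q x`
vanishes on `S`, and `Q d` vanishes on `S ∖ {ℓ}`. Hence the cross term `dᵀ Q x` is zero and
`v(y) = v(x) + d_ℓ s` with `s = (Q d)_ℓ`. Restricted to `S`, `d` solves `Q_S d_S = s e_ℓ`, so
`d_S = s (Q_S)⁻¹ e_ℓ`; in particular `d_ℓ = s ((Q_S)⁻¹)_ℓℓ`, which gives the quadratic relation,
and `d_ℓ = 0` forces `s = 0` and then `d = 0`.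
-/

open Matrix

namespace Matrix

variable {ι R : Type*} [Fintype ι]

lemma dotProduct_eq_mul_of_forall_ne [NonUnitalNonAssocSemiring R] {a b : ι → R} (ℓ : ι)
    (h : ∀ i ≠ ℓ, a i = 0 ∨ b i = 0) : a ⬝ᵥ b = a ℓ * b ℓ :=
  Finset.sum_eq_single ℓ (fun i _ hi => by rcases h i hi with h | h <;> simp [h])
    (fun hℓ => absurd (Finset.mem_univ ℓ) hℓ)

lemma add_dotProduct_mulVec_add_of_isSymm [CommSemiring R] {Q : Matrix ι ι R} (hQ : Q.IsSymm)
    {x d : ι → R} (h : d ⬝ᵥ Q *ᵥ x = 0) :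
    (x + d) ⬝ᵥ Q *ᵥ (x + d) = x ⬝ᵥ Q *ᵥ x + d ⬝ᵥ Q *ᵥ d := by
  have h' : x ⬝ᵥ Q *ᵥ d = 0 := by
    rw [dotProduct_mulVec, ← mulVec_transpose, hQ.eq, dotProduct_comm, h]
  simp only [mulVec_add, dotProduct_add, add_dotProduct, h, h', add_zero, zero_add]

lemma submatrix_mulVec_restrict_of_support [NonUnitalNonAssocSemiring R] (Q : Matrix ι ι R)
    {S : Finset ι} {d : ι → R} (hd : ∀ i ∉ S, d i = 0) (i : S) :
    (Q.submatrix (Subtype.val : S → ι) Subtype.val *ᵥ fun j : S => d j) i = (Q *ᵥ d) i := by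
  simp only [mulVec, dotProduct, submatrix_apply]
  rw [Finset.sum_coe_sort S (fun j => Q i j * d j)]
  exact Finset.sum_subset (Finset.subset_univ S) (fun j _ hj => by rw [hd j hj, mul_zero])

lemma apply_eq_inv_mul_of_mulVec_eq_zero [CommRing R] [DecidableEq ι] {Q : Matrix ι ι R}
    {S : Finset ι} (hQS : IsUnit (Q.submatrix (Subtype.val : S → ι) Subtype.val).det)
    {d : ι → R} {ℓ : S} (hd : ∀ i ∉ S, d i = 0) (hQd : ∀ i : S, i ≠ ℓ → (Q *ᵥ d) i = 0)
    (i : S) : d i = (Q.submatrix (Subtype.val : S → ι) Subtype.val)⁻¹ i ℓ * (Q *ᵥ d) ℓ := by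
  set A : Matrix S S R := Q.submatrix (↑) (↑)
  have hA : A *ᵥ (fun j : S => d j) = Pi.single ℓ ((Q *ᵥ d) ℓ) := by
    funext j
    rw [submatrix_mulVec_restrict_of_support Q hd]
    obtain rfl | hj := eq_or_ne j ℓ
    · simp
    · rw [hQd j hj, Pi.single_eq_of_ne hj]
  have := congrFun (congrArg (A⁻¹ *ᵥ ·) hA) i
  simpa [mulVec_mulVec, nonsing_inv_mul A hQS] using this

lemma dotProduct_mulVec_eq_add_mul_of_eq_off [CommRing R] {Q : Matrix ι ι R} (hQ : Q.IsSymm)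
    {S : Finset ι} {ℓ : ι} {x y : ι → R} (hyx : ∀ i ∉ S, y i = x i)
    (hx : ∀ i ∈ S, (Q *ᵥ x) i = 0) (hy : ∀ i ∈ S, i ≠ ℓ → (Q *ᵥ y) i = 0) :
    y ⬝ᵥ Q *ᵥ y = x ⬝ᵥ Q *ᵥ x + (y ℓ - x ℓ) * (Q *ᵥ (y - x)) ℓ := by
  set d := y - x
  have hd : ∀ i ∉ S, d i = 0 := fun i hi => sub_eq_zero.mpr (hyx i hi)
  have cross : d ⬝ᵥ Q *ᵥ x = 0 := Finset.sum_eq_zero fun i _ => by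
    by_cases hi : i ∈ S
    · rw [hx i hi, mul_zero]
    · rw [hd i hi, zero_mul]
  have diag : d ⬝ᵥ Q *ᵥ d = d ℓ * (Q *ᵥ d) ℓ := dotProduct_eq_mul_of_forall_ne ℓ fun i hiℓ => by
    by_cases hi : i ∈ S
    · right; simp [d, mulVec_sub, hx i hi, hy i hi hiℓ]
    · exact .inl (hd i hi)
  calc y ⬝ᵥ Q *ᵥ y = (x + d) ⬝ᵥ Q *ᵥ (x + d) := by rw [add_sub_cancel]
    _ = x ⬝ᵥ Q *ᵥ x + d ⬝ᵥ Q *ᵥ d := add_dotProduct_mulVec_add_of_isSymm hQ cross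
    _ = x ⬝ᵥ Q *ᵥ x + (y ℓ - x ℓ) * (Q *ᵥ d) ℓ := by rw [diag]; rfl

variable [DecidableEq ι] {Q : Matrix ι ι ℝ} {S : Finset ι} {ℓ : ι} {x y : ι → ℝ}

lemma sub_apply_eq_inv_mul_of_posDef (hQ : Q.PosDef) (hℓ : ℓ ∈ S)
    (hyx : ∀ i ∉ S, y i = x i) (hx : ∀ i ∈ S, (Q *ᵥ x) i = 0)
    (hy : ∀ i ∈ S, i ≠ ℓ → (Q *ᵥ y) i = 0) (i : S) :
    y i - x i =
      (Q.submatrix (Subtype.val : S → ι) Subtype.val)⁻¹ i ⟨ℓ, hℓ⟩ * (Q *ᵥ (y - x)) ℓ := by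
  have hA := (hQ.submatrix (Subtype.val_injective (p := (· ∈ S)))).isUnit
  refine apply_eq_inv_mul_of_mulVec_eq_zero ((isUnit_iff_isUnit_det _).mp hA) (d := y - x)
    (fun i hi => sub_eq_zero.mpr (hyx i hi)) (fun j hj => ?_) i
  rw [mulVec_sub, Pi.sub_apply, hx j j.2, hy j j.2 (fun h => hj (Subtype.ext h)), sub_zero]

theorem dotProduct_mulVec_eq_add_sq_div_of_posDef (hQ : Q.PosDef) (hℓ : ℓ ∈ S)
    (hyx : ∀ i ∉ S, y i = x i) (hx : ∀ i ∈ S, (Q *ᵥ x) i = 0)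
    (hy : ∀ i ∈ S, i ≠ ℓ → (Q *ᵥ y) i = 0) :
    y ⬝ᵥ Q *ᵥ y = x ⬝ᵥ Q *ᵥ x +
      (y ℓ - x ℓ) ^ 2 / (Q.submatrix (Subtype.val : S → ι) Subtype.val)⁻¹ ⟨ℓ, hℓ⟩ ⟨ℓ, hℓ⟩ := by
  have hβ := (hQ.submatrix Subtype.val_injective).inv.diag_pos (i := (⟨ℓ, hℓ⟩ : S))
  rw [dotProduct_mulVec_eq_add_mul_of_eq_off (isHermitian_iff_isSymm.mp hQ.isHermitian)
    hyx hx hy, sub_apply_eq_inv_mul_of_posDef hQ hℓ hyx hx hy ⟨ℓ, hℓ⟩]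
  field_simp

theorem eq_of_apply_eq_of_posDef (hQ : Q.PosDef) (hℓ : ℓ ∈ S)
    (hyx : ∀ i ∉ S, y i = x i) (hx : ∀ i ∈ S, (Q *ᵥ x) i = 0)
    (hy : ∀ i ∈ S, i ≠ ℓ → (Q *ᵥ y) i = 0) (hyxℓ : y ℓ = x ℓ) : y = x := by
  have hβ := (hQ.submatrix Subtype.val_injective).inv.diag_pos (i := (⟨ℓ, hℓ⟩ : S))
  have hd := sub_apply_eq_inv_mul_of_posDef hQ hℓ hyx hx hy
  have hs : (Q *ᵥ (y - x)) ℓ = 0 := by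
    simpa [hyxℓ, hβ.ne'] using (hd ⟨ℓ, hℓ⟩).symm
  funext i
  by_cases hi : i ∈ S
  · simpa [hs, sub_eq_zero] using hd ⟨i, hi⟩
  · exact hyx i hi

end Matrix

/-- with K = M ∖ {ℓ}, μ ∈ ℝ^K, ϱ = (c_K(μ))_ℓ, and τ(r) agreeing with
μ on K and equal to r at ℓ, one has for every r:
γ_M(τ(r)) = γ_K(μ) + (r − ϱ)² / ((Q^{(K^c)})⁻¹)_{ℓℓ}, and c_M(τ(ϱ)) = c_K(μ).
Here c r denotes c_M(τ(r)), so γ_M(τ(r)) = v(c r), and γ_K(μ) = v(cK). -/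
theorem markowitz_quadratic_relation_along_ray {n : ℕ}
    (Q : Matrix (Fin n) (Fin n) ℝ) (hQ : Q.PosDef)
    (M : Finset (Fin n))
    (ℓ : Fin n) (hℓ : ℓ ∈ M)
    (μ : Fin n → ℝ)
    (cK : Fin n → ℝ)
    (hcK1 : ∀ j ∈ M.erase ℓ, cK j = μ j)
    (hcK2 : ∀ i ∉ M.erase ℓ, Q.mulVec cK i = 0)
    (c : ℝ → (Fin n → ℝ))
    (hc1 : ∀ r : ℝ, ∀ j ∈ M, c r j = Function.update μ ℓ r j)
    (hc2 : ∀ r : ℝ, ∀ i ∉ M, Q.mulVec (c r) i = 0) :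
    (∀ r : ℝ, (c r) ⬝ᵥ Q.mulVec (c r) =
        cK ⬝ᵥ Q.mulVec cK + (r - cK ℓ) ^ 2 /
          ((Q.submatrix ((↑) : ↥((M.erase ℓ)ᶜ) → Fin n) ((↑) : ↥((M.erase ℓ)ᶜ) → Fin n))⁻¹
            ⟨ℓ, by simp⟩ ⟨ℓ, by simp⟩)) ∧
    c (cK ℓ) = cK := by
  have hℓK : ℓ ∈ (M.erase ℓ)ᶜ := by simp
  have hcℓ (r : ℝ) : c r ℓ = r := by simp [hc1 r ℓ hℓ]
  have hccK (r : ℝ) : ∀ i ∉ (M.erase ℓ)ᶜ, c r i = cK i := fun i hi => by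
    obtain ⟨hiℓ, hiM⟩ := Finset.mem_erase.mp (Finset.notMem_compl.mp hi)
    rw [hc1 r i hiM, Function.update_of_ne hiℓ, hcK1 i (Finset.mem_erase.mpr ⟨hiℓ, hiM⟩)]
  have hQcK : ∀ i ∈ (M.erase ℓ)ᶜ, (Q *ᵥ cK) i = 0 := fun i hi => hcK2 i (Finset.mem_compl.mp hi)
  have hQc (r : ℝ) : ∀ i ∈ (M.erase ℓ)ᶜ, i ≠ ℓ → (Q *ᵥ c r) i = 0 := fun i hi hiℓ =>
    hc2 r i fun hiM => Finset.mem_compl.mp hi (Finset.mem_erase.mpr ⟨hiℓ, hiM⟩)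
  refine ⟨fun r => ?_, ?_⟩
  · simpa [hcℓ] using dotProduct_mulVec_eq_add_sq_div_of_posDef hQ hℓK (hccK r) hQcK (hQc r)
  · exact eq_of_apply_eq_of_posDef hQ hℓK (hccK _) hQcK (hQc _) (hcℓ _)
end
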